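/- For every expansive integer n×n matrix A, there exists a compact set K ⊂ ℝ^n with 0 in its interior that tiles ℝ^n by integer translations and satisfies AK ⊃ K. -/

import Mathlib

open Matrix MeasureTheory
open scoped ENNReal NNReal

def zvec {n : ℕ} (k : Fin n → ℤ) : Fin n → ℝ := fun i => (k i : ℝ)

def TilesAE {n : ℕ} (K : Set (Fin n → ℝ)) : Prop :=
  ∀ᵐ x : Fin n → ℝ ∂volume, ∃! k : Fin n → ℤ, x + zvec k ∈ K

def Expansive {n : ℕ} (A : Matrix (Fin n) (Fin n) ℝ) : Prop :=
  ∀ μ ∈ spectrum ℂ (A.map (algebraMap ℝ ℂ)), 1 < ‖μ‖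

namespace Stmt18Aux

variable {n : ℕ}

lemma zvec_zero : zvec (0 : Fin n → ℤ) = 0 := by
  funext i; simp [zvec]

lemma zvec_add (a b : Fin n → ℤ) : zvec (a + b) = zvec a + zvec b := by
  funext i; simp [zvec]

lemma zvec_sub (a b : Fin n → ℤ) : zvec (a - b) = zvec a - zvec b := by
  funext i; simp [zvec]

/-- canonical cell index -/
noncomputable def flr (x : Fin n → ℝ) : Fin n → ℤ := fun i => ⌊x i + 2⁻¹⌋

def cell (k : Fin n → ℤ) : Set (Fin n → ℝ) := {x | flr x = k}

def tr (P : Set (Fin n → ℝ)) : Set (Fin n → ℝ) :=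
  ⋃ z : Fin n → ℤ, (fun x => x + zvec z) ⁻¹' P

def Sel (P : Set (Fin n → ℝ)) : Prop :=
  ∀ p ∈ P, ∀ z : Fin n → ℤ, p + zvec z ∈ P → z = 0

def NF (S : Set (Fin n → ℝ)) : Prop := volume (frontier S) = 0

def step (X P : Set (Fin n → ℝ)) (k : Fin n → ℤ) : Set (Fin n → ℝ) :=
  P ∪ ((X ∩ cell k) \ tr P)

def greedy (X P : Set (Fin n → ℝ)) (l : List (Fin n → ℤ)) : Set (Fin n → ℝ) :=
  l.foldl (step X) P

lemma mem_tr {P : Set (Fin n → ℝ)} {x : Fin n → ℝ} :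
    x ∈ tr P ↔ ∃ z : Fin n → ℤ, x + zvec z ∈ P := by
  simp [tr]

lemma subset_tr {P : Set (Fin n → ℝ)} : P ⊆ tr P := fun x hx =>
  mem_tr.2 ⟨0, by simpa [zvec_zero] using hx⟩

lemma tr_mono {P Q : Set (Fin n → ℝ)} (h : P ⊆ Q) : tr P ⊆ tr Q := by
  intro x hx
  obtain ⟨z, hz⟩ := mem_tr.1 hx
  exact mem_tr.2 ⟨z, h hz⟩

lemma tr_shift {P : Set (Fin n → ℝ)} {x : Fin n → ℝ} (w : Fin n → ℤ) (h : x ∈ tr P) :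
    x + zvec w ∈ tr P := by
  obtain ⟨z, hz⟩ := mem_tr.1 h
  refine mem_tr.2 ⟨z - w, ?_⟩
  have : x + zvec w + zvec (z - w) = x + zvec z := by
    rw [zvec_sub]; abel
  rw [this]; exact hz

lemma mem_cell_iff {k : Fin n → ℤ} {x : Fin n → ℝ} :
    x ∈ cell k ↔ ∀ i, (k i : ℝ) - 2⁻¹ ≤ x i ∧ x i < (k i : ℝ) + 2⁻¹ := by
  constructor
  · intro h i
    have h' : ⌊x i + 2⁻¹⌋ = k i := congrFun h i
    have := Int.floor_eq_iff.1 h'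
    constructor <;> [linarith [this.1]; linarith [this.2]]
  · intro h
    funext i
    rw [show flr x i = ⌊x i + 2⁻¹⌋ from rfl, Int.floor_eq_iff]
    refine ⟨by linarith [(h i).1], ?_⟩
    push_cast
    linarith [(h i).2]
    

lemma cell_eq_pi (k : Fin n → ℤ) :
    cell k = Set.pi Set.univ (fun i => Set.Ico ((k i : ℝ) - 2⁻¹) ((k i : ℝ) + 2⁻¹)) := by
  ext x
  simp only [Set.mem_pi, Set.mem_univ, forall_true_left, Set.mem_Ico]
  exact mem_cell_iff

lemma convex_cell (k : Fin n → ℤ) : Convex ℝ (cell k) := by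
  rw [cell_eq_pi]
  exact convex_pi (fun i _ => convex_Ico _ _)

lemma NF_cell (k : Fin n → ℤ) : NF (cell k) :=
  (convex_cell k).addHaar_frontier volume

lemma cell_unique {k z : Fin n → ℤ} {x : Fin n → ℝ} (hx : x ∈ cell k)
    (hx' : x + zvec z ∈ cell k) : z = 0 := by
  funext i
  have h1 := (mem_cell_iff.1 hx) i
  have h2 := (mem_cell_iff.1 hx') i
  simp only [Pi.add_apply, zvec] at h2
  have : (z i : ℝ) = 0 := by
    have hz1 : (z i : ℝ) < 1 := by linarith [h1.1, h2.2]
    have hz2 : (-1 : ℝ) < z i := by linarith [h1.2, h2.1]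
    have : z i = 0 := by
      have p1 : z i < 1 := by exact_mod_cast hz1
      have p2 : (-1 : ℤ) < z i := by exact_mod_cast hz2
      omega
    exact_mod_cast this
  exact_mod_cast this

end Stmt18Aux

namespace Stmt18Aux

variable {n : ℕ}

lemma NF_union {S T : Set (Fin n → ℝ)} (hS : NF S) (hT : NF T) : NF (S ∪ T) := by
  have h : frontier (S ∪ T) ⊆ frontier S ∪ frontier T := by
    intro x hx
    rcases hx with ⟨hc, hi⟩
    rw [closure_union] at hc
    by_cases hxS : x ∈ closure S
    · by_cases hxiS : x ∈ interior S
      · exact absurd (interior_mono Set.subset_union_left hxiS) hi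
      · exact Or.inl ⟨hxS, hxiS⟩
    · have hxT : x ∈ closure T := hc.resolve_left hxS
      by_cases hxiT : x ∈ interior T
      · exact absurd (interior_mono Set.subset_union_right hxiT) hi
      · exact Or.inr ⟨hxT, hxiT⟩
  exact measure_mono_null h (by rw [measure_union_null_iff]; exact ⟨hS, hT⟩)

lemma NF_compl {S : Set (Fin n → ℝ)} (hS : NF S) : NF Sᶜ := by
  unfold NF; rwa [frontier_compl]

lemma NF_inter {S T : Set (Fin n → ℝ)} (hS : NF S) (hT : NF T) : NF (S ∩ T) := by
  have : S ∩ T = (Sᶜ ∪ Tᶜ)ᶜ := by simp [Set.compl_union]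
  rw [this]
  exact NF_compl (NF_union (NF_compl hS) (NF_compl hT))

lemma NF_diff {S T : Set (Fin n → ℝ)} (hS : NF S) (hT : NF T) : NF (S \ T) :=
  NF_inter hS (NF_compl hT)

open Bornology in
lemma NF_tr {P : Set (Fin n → ℝ)} (hP : NF P) (hb : IsBounded P) : NF (tr P) := by
  classical
  obtain ⟨R, hR⟩ := isBounded_iff_forall_norm_le.1 hb
  set T : (Fin n → ℤ) → Set (Fin n → ℝ) := fun z => (fun x => x + zvec z) ⁻¹' P with hT
  have hloc : LocallyFinite T := by
    intro x
    refine ⟨Metric.ball x 1, Metric.ball_mem_nhds x one_pos, ?_⟩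
    have hsub : {z : Fin n → ℤ | (T z ∩ Metric.ball x 1).Nonempty} ⊆
        ↑(Fintype.piFinset fun _ : Fin n =>
          Finset.Icc (-(⌈R + ‖x‖ + 1⌉ + 1)) (⌈R + ‖x‖ + 1⌉ + 1)) := by
      intro z hz
      obtain ⟨y, hy1, hy2⟩ := hz
      have hyP : y + zvec z ∈ P := hy1
      have hny : ‖y‖ ≤ ‖x‖ + 1 := by
        have := mem_ball_iff_norm.1 hy2
        calc ‖y‖ = ‖y - x + x‖ := by ring_nf
        _ ≤ ‖y - x‖ + ‖x‖ := norm_add_le _ _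
        _ ≤ ‖x‖ + 1 := by linarith
      have hnz : ‖zvec z‖ ≤ R + ‖x‖ + 1 := by
        calc ‖zvec z‖ = ‖(y + zvec z) - y‖ := by ring_nf
        _ ≤ ‖y + zvec z‖ + ‖y‖ := norm_sub_le _ _
        _ ≤ R + (‖x‖ + 1) := add_le_add (hR _ hyP) hny
        _ = R + ‖x‖ + 1 := by ring
      simp only [Finset.coe_sort_coe, Finset.mem_coe, Fintype.mem_piFinset, Finset.mem_Icc]
      intro i
      have hzi : |(z i : ℝ)| ≤ R + ‖x‖ + 1 := by
        calc |(z i : ℝ)| = ‖zvec z i‖ := rfl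
        _ ≤ ‖zvec z‖ := norm_le_pi_norm _ i
        _ ≤ R + ‖x‖ + 1 := hnz
      rw [abs_le] at hzi
      have hceil := Int.le_ceil (R + ‖x‖ + 1)
      constructor
      · have : (-(⌈R + ‖x‖ + 1⌉ + 1) : ℝ) ≤ (z i : ℝ) := by push_cast; linarith [hzi.1]
        exact_mod_cast this
      · have : (z i : ℝ) ≤ ((⌈R + ‖x‖ + 1⌉ + 1 : ℤ) : ℝ) := by push_cast; linarith [hzi.2]
        exact_mod_cast this
    exact Set.Finite.subset (Finset.finite_toSet _) hsub
  have hfr : frontier (tr P) ⊆ ⋃ z : Fin n → ℤ, frontier (T z) := by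
    intro x hx
    rcases hx with ⟨hc, hi⟩
    have : x ∈ ⋃ z, closure (T z) := by
      rw [← hloc.closure_iUnion]; exact hc
    obtain ⟨s, ⟨z, rfl⟩, hxz⟩ := this
    refine Set.mem_iUnion.2 ⟨z, hxz, fun hxi => hi ?_⟩
    exact interior_mono (Set.subset_iUnion T z) hxi
  refine measure_mono_null hfr (measure_iUnion_null fun z => ?_)
  have : frontier (T z) = (fun x => x + zvec z) ⁻¹' frontier P :=
    ((Homeomorph.addRight (zvec z)).preimage_frontier P).symm
  rw [this]
  rw [measure_preimage_add_right]
  exact hP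

end Stmt18Aux

namespace Stmt18Aux

variable {n : ℕ}

lemma subset_step {X P : Set (Fin n → ℝ)} {k : Fin n → ℤ} : P ⊆ step X P k :=
  Set.subset_union_left

lemma step_subset {X P : Set (Fin n → ℝ)} {k : Fin n → ℤ} : step X P k ⊆ P ∪ X := by
  intro x hx
  rcases hx with h | h
  · exact Or.inl h
  · exact Or.inr h.1.1

lemma subset_greedy {X : Set (Fin n → ℝ)} (l : List (Fin n → ℤ)) (P : Set (Fin n → ℝ)) :
    P ⊆ greedy X P l := by
  induction l generalizing P with
  | nil => exact fun x hx => hx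
  | cons k t ih =>
    exact fun x hx => ih (step X P k) (subset_step hx)

lemma greedy_subset {X : Set (Fin n → ℝ)} (l : List (Fin n → ℤ)) (P : Set (Fin n → ℝ)) :
    greedy X P l ⊆ P ∪ X := by
  induction l generalizing P with
  | nil => exact fun x hx => Or.inl hx
  | cons k t ih =>
    intro x hx
    rcases ih (step X P k) hx with h | h
    · exact step_subset h
    · exact Or.inr h

lemma sel_step {X P : Set (Fin n → ℝ)} {k : Fin n → ℤ} (hP : Sel P) : Sel (step X P k) := by
  intro p hp z hpz
  rcases hp with hp | hp <;> rcases hpz with hpz | hpz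
  · exact hP p hp z hpz
  · exfalso
    refine hpz.2 (mem_tr.2 ⟨-z, ?_⟩)
    have : p + zvec z + zvec (-z) = p := by
      have : zvec (-z) = -zvec z := by rw [show -z = 0 - z by ring, zvec_sub, zvec_zero]; ring
      rw [this]; abel
    rw [this]; exact hp
  · exact absurd (mem_tr.2 ⟨z, hpz⟩) hp.2
  · exact cell_unique hp.1.2 hpz.1.2

lemma sel_greedy {X : Set (Fin n → ℝ)} (l : List (Fin n → ℤ)) (P : Set (Fin n → ℝ))
    (hP : Sel P) : Sel (greedy X P l) := by
  induction l generalizing P with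
  | nil => exact hP
  | cons k t ih => exact ih _ (sel_step hP)

lemma mem_tr_greedy {X : Set (Fin n → ℝ)} (l : List (Fin n → ℤ)) (P : Set (Fin n → ℝ))
    {x : Fin n → ℝ} (hx : x ∈ X) (hk : flr x ∈ l) : x ∈ tr (greedy X P l) := by
  induction l generalizing P with
  | nil => exact absurd hk List.not_mem_nil
  | cons k t ih =>
    rcases List.mem_cons.1 hk with hk | hk
    · -- x's cell is the head
      by_cases hxtr : x ∈ tr P
      · exact tr_mono (subset_greedy t _) (tr_mono subset_step hxtr)
      · have hxstep : x ∈ step X P k := Or.inr ⟨⟨hx, hk ▸ rfl⟩, hxtr⟩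
        exact tr_mono (subset_greedy t _) (subset_tr hxstep)
    · exact ih _ hk

open Bornology in
lemma NF_step {X P : Set (Fin n → ℝ)} {k : Fin n → ℤ} (hX : NF X) (hXb : IsBounded X)
    (hP : NF P) (hPb : IsBounded P) : NF (step X P k) ∧ IsBounded (step X P k) := by
  constructor
  · exact NF_union hP (NF_diff (NF_inter hX (NF_cell k)) (NF_tr hP hPb))
  · exact hPb.union (((hXb.subset Set.inter_subset_left).subset (Set.diff_subset)).subset
      (subset_refl _))

open Bornology in
lemma NF_greedy {X : Set (Fin n → ℝ)} (l : List (Fin n → ℤ)) (P : Set (Fin n → ℝ))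
    (hX : NF X) (hXb : IsBounded X) (hP : NF P) (hPb : IsBounded P) :
    NF (greedy X P l) ∧ IsBounded (greedy X P l) := by
  induction l generalizing P with
  | nil => exact ⟨hP, hPb⟩
  | cons k t ih =>
    obtain ⟨h1, h2⟩ := NF_step hX hXb hP hPb (k := k)
    exact ih _ h1 h2

end Stmt18Aux
namespace Stmt18Aux


attribute [local instance] Matrix.linftyOpNormedRing Matrix.linftyOpNormedAlgebra

lemma mulVec_map_complex {n : ℕ} (M : Matrix (Fin n) (Fin n) ℝ) (x : Fin n → ℝ) :
    (M.map (algebraMap ℝ ℂ)) *ᵥ (fun i => (x i : ℂ)) = fun i => (((M *ᵥ x) i : ℝ) : ℂ) := by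
  funext i
  simp only [Matrix.mulVec, dotProduct, Matrix.map_apply, algebraMap.coe_smul]
  push_cast
  rfl

lemma nnnorm_complexify {n : ℕ} (x : Fin n → ℝ) :
    ‖(fun i => (x i : ℂ))‖₊ = ‖x‖₊ := by
  simp [Pi.nnnorm_def]

lemma exists_contraction {n : ℕ} (Ar : Matrix (Fin n) (Fin n) ℝ)
    (hA : ∀ μ ∈ spectrum ℂ (Ar.map (algebraMap ℝ ℂ)), 1 < ‖μ‖) :
    ∃ (Br : Matrix (Fin n) (Fin n) ℝ) (m : ℕ) (θ : ℝ),
      Ar * Br = 1 ∧ Br * Ar = 1 ∧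
      1 ≤ m ∧ 0 < θ ∧ θ < 1 ∧ ∀ x : Fin n → ℝ, ‖(Br ^ m) *ᵥ x‖ ≤ θ ^ m * ‖x‖ := by
  classical
  set Ac := Ar.map (algebraMap ℝ ℂ) with hAc
  -- `Ac` is a unit
  have hU : IsUnit Ac := by
    by_contra h
    have h0 : (0 : ℂ) ∈ spectrum ℂ Ac := (spectrum.zero_mem_iff ℂ).2 h
    have := hA 0 h0
    norm_num at this
  -- real determinant is nonzero
  have hdetc : Ac.det = ((Ar.det : ℝ) : ℂ) := ((algebraMap ℝ ℂ).map_det Ar).symm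
  have hdet : IsUnit Ar.det := by
    have := (Matrix.isUnit_iff_isUnit_det _).1 hU
    rw [hdetc] at this
    have : (Ar.det : ℂ) ≠ 0 := this.ne_zero
    exact isUnit_iff_ne_zero.2 (by exact_mod_cast this)
  set Br := Ar⁻¹ with hBr
  have hAB : Ar * Br = 1 := Matrix.mul_nonsing_inv _ hdet
  have hBA : Br * Ar = 1 := Matrix.nonsing_inv_mul _ hdet
  set Bc := Br.map (algebraMap ℝ ℂ) with hBc
  have hABc : Ac * Bc = 1 := by
    rw [hAc, hBc, ← Matrix.map_mul, hAB, Matrix.map_one] <;> simp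
  have hBcinv : Ac⁻¹ = Bc := Matrix.inv_eq_right_inv hABc
  -- the unit
  set u := hU.unit with hu
  have huval : (u : Matrix (Fin n) (Fin n) ℂ) = Ac := hU.unit_spec
  have huinv : ((u⁻¹ : (Matrix (Fin n) (Fin n) ℂ)ˣ) : Matrix (Fin n) (Fin n) ℂ) = Bc := by
    rw [Matrix.coe_units_inv, huval, hBcinv]
  -- spectrum of Bc lies in the open unit disc
  have hspec : ∀ μ ∈ spectrum ℂ Bc, ‖μ‖ < 1 := by
    intro μ hμ
    have hμu : μ ∈ spectrum ℂ ((u⁻¹ : (Matrix (Fin n) (Fin n) ℂ)ˣ) : Matrix (Fin n) (Fin n) ℂ) := by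
      rwa [huinv]
    have hμ0 : μ ≠ 0 := by
      intro h0
      rw [h0] at hμu
      exact ((spectrum.zero_mem_iff ℂ).1 hμu) (u⁻¹).isUnit
    set r : ℂˣ := (Units.mk0 μ hμ0)⁻¹ with hr
    have hrinv : ((r⁻¹ : ℂˣ) : ℂ) = μ := by simp [hr]
    have hmem : ((r⁻¹ : ℂˣ) : ℂ) ∈ spectrum ℂ ((u⁻¹ : (Matrix (Fin n) (Fin n) ℂ)ˣ) : Matrix (Fin n) (Fin n) ℂ) := by
      rwa [hrinv]
    have : ((r : ℂˣ) : ℂ) ∈ spectrum ℂ ((u : (Matrix (Fin n) (Fin n) ℂ)ˣ) : Matrix (Fin n) (Fin n) ℂ) :=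
      spectrum.inv_mem_iff.2 hmem
    rw [huval] at this
    have h1 : 1 < ‖((r : ℂˣ) : ℂ)‖ := hA _ this
    have hrval : ((r : ℂˣ) : ℂ) = μ⁻¹ := by simp [hr]
    rw [hrval, norm_inv] at h1
    have hμpos : 0 < ‖μ‖ := norm_pos_iff.2 hμ0
    rw [lt_inv_comm₀] at h1 <;> [skip; norm_num; exact hμpos]
    simpa using h1
  -- spectral radius of Bc is < 1
  haveI : CompleteSpace (Matrix (Fin n) (Fin n) ℂ) := FiniteDimensional.complete ℂ _
  have hρ : spectralRadius ℂ Bc < 1 := by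
    rcases Set.eq_empty_or_nonempty (spectrum ℂ Bc) with he | hne
    · simp [spectralRadius, he]
    · obtain ⟨μ₀, hμ₀, hmax⟩ := (spectrum.isCompact Bc).exists_isMaxOn hne
        continuous_norm.continuousOn
      have hnn : (‖μ₀‖₊ : ℝ≥0∞) < 1 := by
        have : ‖μ₀‖₊ < 1 := by
          have := hspec μ₀ hμ₀
          exact_mod_cast this
        exact_mod_cast this
      refine lt_of_le_of_lt ?_ hnn
      refine iSup₂_le fun k hk => ?_
      have : ‖k‖₊ ≤ ‖μ₀‖₊ := by
        have := hmax hk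
        exact_mod_cast this
      exact_mod_cast ENNReal.coe_le_coe.2 this
  -- Gelfand's formula
  obtain ⟨c, hc1, hc2⟩ := exists_between hρ
  have hcne : c ≠ ⊤ := (hc2.trans_le le_top).ne
  have hc0 : c ≠ 0 := by
    intro h
    rw [h] at hc1
    exact (not_lt_of_ge zero_le) hc1
  have htend := spectrum.pow_nnnorm_pow_one_div_tendsto_nhds_spectralRadius Bc
  have hev := htend.eventually_lt_const hc1
  obtain ⟨m₀, hm₀⟩ := Filter.eventually_atTop.1 hev
  set m := max m₀ 1 with hm
  have hm1 : 1 ≤ m := le_max_right _ _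
  have hmne : (m : ℝ) ≠ 0 := by
    have : 0 < m := hm1
    positivity
  have hbound : (‖Bc ^ m‖₊ : ℝ≥0∞) < c ^ m := by
    have h1 := hm₀ m (le_max_left _ _)
    have h2 : ((‖Bc ^ m‖₊ : ℝ≥0∞) ^ ((1 : ℝ)/m)) ^ m < c ^ m :=
      ENNReal.pow_lt_pow_left (by omega) h1
    calc (‖Bc ^ m‖₊ : ℝ≥0∞) = ((‖Bc ^ m‖₊ : ℝ≥0∞) ^ ((1 : ℝ)/m)) ^ m := by
          rw [← ENNReal.rpow_natCast (((‖Bc ^ m‖₊ : ℝ≥0∞)) ^ ((1 : ℝ)/m)) m,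
            ← ENNReal.rpow_mul, one_div, inv_mul_cancel₀ hmne, ENNReal.rpow_one]
      _ < c ^ m := h2
  set θ0 : NNReal := c.toNNReal with hθ0
  have hθ0pos : 0 < θ0 := ENNReal.toNNReal_pos hc0 hcne
  have hθ0lt1 : θ0 < 1 := by
    have : (θ0 : ℝ≥0∞) < 1 := by rwa [ENNReal.coe_toNNReal hcne]
    exact_mod_cast this
  have hnorm : ‖Bc ^ m‖₊ < θ0 ^ m := by
    have : (‖Bc ^ m‖₊ : ℝ≥0∞) < ((θ0 ^ m : NNReal) : ℝ≥0∞) := by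
      rw [ENNReal.coe_pow, ENNReal.coe_toNNReal hcne]
      exact hbound
    exact_mod_cast this
  refine ⟨Br, m, (θ0 : ℝ), hAB, hBA, hm1, by exact_mod_cast hθ0pos, by exact_mod_cast hθ0lt1, ?_⟩
  intro x
  have hmap : Bc ^ m = (Br ^ m).map (algebraMap ℝ ℂ) := by
    have := map_pow ((algebraMap ℝ ℂ).mapMatrix) Br m
    simpa [RingHom.mapMatrix_apply, hBc] using this.symm
  have hx : ‖(Br ^ m) *ᵥ x‖₊ ≤ ‖Bc ^ m‖₊ * ‖x‖₊ := by
    have h1 : (Bc ^ m) *ᵥ (fun i => ((x i : ℝ) : ℂ)) = fun i => ((((Br ^ m) *ᵥ x) i : ℝ) : ℂ) := by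
      rw [hmap]; exact mulVec_map_complex _ _
    have h2 := Matrix.linfty_opNNNorm_mulVec (Bc ^ m) (fun i => ((x i : ℝ) : ℂ))
    rw [h1, nnnorm_complexify, nnnorm_complexify] at h2
    exact h2
  have : ‖(Br ^ m) *ᵥ x‖₊ ≤ θ0 ^ m * ‖x‖₊ :=
    hx.trans (mul_le_mul_left hnorm.le _)
  calc ‖(Br ^ m) *ᵥ x‖ = ((‖(Br ^ m) *ᵥ x‖₊ : ℝ)) := rfl
    _ ≤ ((θ0 ^ m * ‖x‖₊ : NNReal) : ℝ) := by exact_mod_cast this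
    _ = (θ0 : ℝ) ^ m * ‖x‖ := by push_cast; rfl



end Stmt18Aux
namespace Stmt18Aux


attribute [local instance] Matrix.linftyOpNormedRing Matrix.linftyOpNormedAlgebra

lemma exists_nu {n : ℕ} (Br : Matrix (Fin n) (Fin n) ℝ) (m : ℕ) (θ : ℝ)
    (hm1 : 1 ≤ m) (hθ0 : 0 < θ) (hθ1 : θ < 1)
    (hcon : ∀ x : Fin n → ℝ, ‖(Br ^ m) *ᵥ x‖ ≤ θ ^ m * ‖x‖) :
    ∃ (ν : (Fin n → ℝ) → ℝ) (Λ : ℝ), 0 ≤ Λ ∧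
      (∀ x, ‖x‖ ≤ ν x) ∧
      (∀ x, ν x ≤ Λ * ‖x‖) ∧
      (∀ x, ν (Br *ᵥ x) ≤ θ * ν x) ∧
      (∀ (x y : Fin n → ℝ) (a b : ℝ), 0 ≤ a → 0 ≤ b → a + b = 1 →
        ν (a • x + b • y) ≤ a * ν x + b * ν y) ∧
      Continuous ν := by
  classical
  set t : ℝ := θ⁻¹ with ht
  have ht0 : 0 < t := inv_pos.2 hθ0
  set ν : (Fin n → ℝ) → ℝ := fun x => ∑ j ∈ Finset.range m, t ^ j * ‖(Br ^ j) *ᵥ x‖ with hν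
  set Λ : ℝ := ∑ j ∈ Finset.range m, t ^ j * ‖Br ^ j‖ with hΛ
  have hterm_nonneg : ∀ (x : Fin n → ℝ) j, 0 ≤ t ^ j * ‖(Br ^ j) *ᵥ x‖ := fun x j => by positivity
  refine ⟨ν, Λ, ?_, ?_, ?_, ?_, ?_, ?_⟩
  · apply Finset.sum_nonneg
    intro j _
    positivity
  · intro x
    have h0 : t ^ 0 * ‖(Br ^ 0) *ᵥ x‖ = ‖x‖ := by simp [Matrix.one_mulVec]
    calc ‖x‖ = t ^ 0 * ‖(Br ^ 0) *ᵥ x‖ := h0.symm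
      _ ≤ ν x := Finset.single_le_sum (fun j _ => hterm_nonneg x j)
          (Finset.mem_range.2 (by omega))
  · intro x
    rw [hν, hΛ, Finset.sum_mul]
    apply Finset.sum_le_sum
    intro j _
    rw [mul_assoc]
    exact mul_le_mul_of_nonneg_left (Matrix.linfty_opNorm_mulVec _ _) (by positivity)
  · intro x
    set F : ℕ → ℝ := fun j => t ^ j * ‖(Br ^ j) *ᵥ x‖ with hF
    have hstep : ∀ j, t ^ j * ‖(Br ^ j) *ᵥ (Br *ᵥ x)‖ = θ * F (j + 1) := by
      intro j
      have h1 : (Br ^ j) *ᵥ (Br *ᵥ x) = (Br ^ (j + 1)) *ᵥ x := by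
        rw [Matrix.mulVec_mulVec, ← pow_succ]
      rw [h1, hF]
      have hts : θ * t ^ (j + 1) = t ^ j := by
        rw [ht, pow_succ', ← mul_assoc, mul_inv_cancel₀ (ne_of_gt hθ0), one_mul]
      rw [← hts]
      ring
    have hFm : F m ≤ F 0 := by
      have : F m ≤ t ^ m * (θ ^ m * ‖x‖) :=
        mul_le_mul_of_nonneg_left (hcon x) (by positivity)
      have htm : t ^ m * θ ^ m = 1 := by
        rw [ht, ← mul_pow, inv_mul_cancel₀ (ne_of_gt hθ0), one_pow]
      calc F m ≤ t ^ m * (θ ^ m * ‖x‖) := this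
        _ = (t ^ m * θ ^ m) * ‖x‖ := by ring
        _ = ‖x‖ := by rw [htm, one_mul]
        _ = F 0 := by simp [hF, Matrix.one_mulVec]
    have hsum : ν (Br *ᵥ x) = θ * ∑ j ∈ Finset.range m, F (j + 1) := by
      rw [hν]
      rw [Finset.mul_sum]
      exact Finset.sum_congr rfl fun j _ => hstep j
    have hsum2 : ∑ j ∈ Finset.range m, F (j + 1) ≤ ν x := by
      have e1 : ∑ j ∈ Finset.range (m + 1), F j
          = (∑ j ∈ Finset.range m, F (j + 1)) + F 0 := Finset.sum_range_succ' F m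
      have e2 : ∑ j ∈ Finset.range (m + 1), F j
          = (∑ j ∈ Finset.range m, F j) + F m := Finset.sum_range_succ F m
      have : (∑ j ∈ Finset.range m, F (j + 1)) = (∑ j ∈ Finset.range m, F j) + F m - F 0 := by
        rw [← e2, e1]; ring
      rw [this]
      have : ν x = ∑ j ∈ Finset.range m, F j := rfl
      linarith [hFm]
    rw [hsum]
    exact mul_le_mul_of_nonneg_left hsum2 (le_of_lt hθ0)
  · intro x y a b ha hb hab
    rw [hν]
    have : a * (∑ j ∈ Finset.range m, t ^ j * ‖(Br ^ j) *ᵥ x‖)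
        + b * (∑ j ∈ Finset.range m, t ^ j * ‖(Br ^ j) *ᵥ y‖)
        = ∑ j ∈ Finset.range m, (a * (t ^ j * ‖(Br ^ j) *ᵥ x‖) + b * (t ^ j * ‖(Br ^ j) *ᵥ y‖)) := by
      rw [Finset.mul_sum, Finset.mul_sum, ← Finset.sum_add_distrib]
    rw [this]
    apply Finset.sum_le_sum
    intro j _
    have h1 : (Br ^ j) *ᵥ (a • x + b • y) = a • ((Br ^ j) *ᵥ x) + b • ((Br ^ j) *ᵥ y) := by
      rw [Matrix.mulVec_add, Matrix.mulVec_smul, Matrix.mulVec_smul]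
    rw [h1]
    have h2 : ‖a • ((Br ^ j) *ᵥ x) + b • ((Br ^ j) *ᵥ y)‖
        ≤ a * ‖(Br ^ j) *ᵥ x‖ + b * ‖(Br ^ j) *ᵥ y‖ := by
      calc ‖a • ((Br ^ j) *ᵥ x) + b • ((Br ^ j) *ᵥ y)‖
          ≤ ‖a • ((Br ^ j) *ᵥ x)‖ + ‖b • ((Br ^ j) *ᵥ y)‖ := norm_add_le _ _
        _ = a * ‖(Br ^ j) *ᵥ x‖ + b * ‖(Br ^ j) *ᵥ y‖ := by
            rw [norm_smul, norm_smul, Real.norm_eq_abs, Real.norm_eq_abs,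
              abs_of_nonneg ha, abs_of_nonneg hb]
    calc t ^ j * ‖a • ((Br ^ j) *ᵥ x) + b • ((Br ^ j) *ᵥ y)‖
        ≤ t ^ j * (a * ‖(Br ^ j) *ᵥ x‖ + b * ‖(Br ^ j) *ᵥ y‖) :=
          mul_le_mul_of_nonneg_left h2 (by positivity)
      _ = a * (t ^ j * ‖(Br ^ j) *ᵥ x‖) + b * (t ^ j * ‖(Br ^ j) *ᵥ y‖) := by ring
  · apply continuous_finset_sum
    intro j _
    exact (continuous_const.mul ((Continuous.matrix_mulVec continuous_const
      continuous_id).norm))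



end Stmt18Aux

namespace Stmt18Aux

attribute [local instance] Matrix.linftyOpNormedRing Matrix.linftyOpNormedAlgebra

variable {n : ℕ}

open Bornology

lemma NF_image {Ar Br : Matrix (Fin n) (Fin n) ℝ} (hBA : Br * Ar = 1) (hAB : Ar * Br = 1)
    {S : Set (Fin n → ℝ)} (hS : NF S) : NF ((fun x => Ar *ᵥ x) '' S) := by
  have hgf : ∀ x, Br *ᵥ (Ar *ᵥ x) = x := fun x => by
    rw [Matrix.mulVec_mulVec, hBA, Matrix.one_mulVec]
  have hfg : ∀ x, Ar *ᵥ (Br *ᵥ x) = x := fun x => by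
    rw [Matrix.mulVec_mulVec, hAB, Matrix.one_mulVec]
  let h : (Fin n → ℝ) ≃ₜ (Fin n → ℝ) :=
    { toFun := fun x => Ar *ᵥ x
      invFun := fun x => Br *ᵥ x
      left_inv := hgf
      right_inv := hfg
      continuous_toFun := Continuous.matrix_mulVec continuous_const continuous_id
      continuous_invFun := Continuous.matrix_mulVec continuous_const continuous_id }
  have hfr : frontier ((fun x => Ar *ᵥ x) '' S) = (fun x => Ar *ᵥ x) '' frontier S :=
    (h.image_frontier S).symm
  unfold NF
  rw [hfr]
  have himg : (fun x => Ar *ᵥ x) '' frontier S = (Ar.mulVecLin : (Fin n → ℝ) →ₗ[ℝ] (Fin n → ℝ)) '' frontier S := by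
    congr 1
  rw [himg, Measure.addHaar_image_linearMap, hS, mul_zero]

lemma bounded_image (Ar : Matrix (Fin n) (Fin n) ℝ) {S : Set (Fin n → ℝ)} (hS : IsBounded S) :
    IsBounded ((fun x => Ar *ᵥ x) '' S) := by
  obtain ⟨R, hR⟩ := isBounded_iff_forall_norm_le.1 hS
  refine isBounded_iff_forall_norm_le.2 ⟨‖Ar‖ * R, ?_⟩
  rintro y ⟨x, hx, rfl⟩
  calc ‖Ar *ᵥ x‖ ≤ ‖Ar‖ * ‖x‖ := Matrix.linfty_opNorm_mulVec _ _
    _ ≤ ‖Ar‖ * R := mul_le_mul_of_nonneg_left (hR x hx) (norm_nonneg _)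

end Stmt18Aux


attribute [local instance] Matrix.linftyOpNormedRing Matrix.linftyOpNormedAlgebra

section Main
open Stmt18Aux Bornology

/-- For every expansive integer matrix `A` there is a compact set `K` with `0` in its
interior which tiles `ℝ^n` by integer translations and satisfies `AK ⊃ K`. -/
theorem stmt18 {n : ℕ} (A : Matrix (Fin n) (Fin n) ℤ)
    (hA : Expansive (A.map (Int.cast : ℤ → ℝ))) :
    ∃ K : Set (Fin n → ℝ), IsCompact K ∧ (0 : Fin n → ℝ) ∈ interior K ∧ TilesAE K ∧
      K ⊆ (A.map (Int.cast : ℤ → ℝ)).mulVec '' K := by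
  classical
  obtain ⟨Br, m, θ, hAB, hBA, hm1, hθ0, hθ1, hcon⟩ :=
    Stmt18Aux.exists_contraction (A.map (Int.cast : ℤ → ℝ)) hA
  set Ar : Matrix (Fin n) (Fin n) ℝ := A.map (Int.cast : ℤ → ℝ) with hArdef
  obtain ⟨ν, Λ, hΛ0, hν1, hν2, hν3, hνconv, hνcont⟩ :=
    Stmt18Aux.exists_nu Br m θ hm1 hθ0 hθ1 hcon
  have hgf : ∀ x, Br *ᵥ (Ar *ᵥ x) = x := fun x => by
    rw [Matrix.mulVec_mulVec, hBA, Matrix.one_mulVec]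
  have hfg : ∀ x, Ar *ᵥ (Br *ᵥ x) = x := fun x => by
    rw [Matrix.mulVec_mulVec, hAB, Matrix.one_mulVec]
  have hνnonneg : ∀ x, 0 ≤ ν x := fun x => (norm_nonneg x).trans (hν1 x)
  -- the adapted ball
  set B : Set (Fin n → ℝ) := {x | ν x ≤ 4⁻¹} with hBdef
  have hBg : ∀ x ∈ B, Br *ᵥ x ∈ B := by
    intro x hx
    have h1 : ν (Br *ᵥ x) ≤ θ * ν x := hν3 x
    have h2 : θ * ν x ≤ ν x := by nlinarith [hνnonneg x]
    exact le_trans h1 (le_trans h2 hx)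
  have hBnorm : ∀ x ∈ B, ‖x‖ ≤ 4⁻¹ := fun x hx => (hν1 x).trans hx
  have hBclosed : IsClosed B := isClosed_Iic.preimage hνcont
  have hBconv : Convex ℝ B := by
    intro x hx y hy a b ha hb hab
    have := hνconv x y a b ha hb hab
    have hx' : ν x ≤ 4⁻¹ := hx
    have hy' : ν y ≤ 4⁻¹ := hy
    show ν (a • x + b • y) ≤ 4⁻¹
    nlinarith
  have hBcell : ∀ x ∈ B, flr x = 0 := by
    intro x hx
    funext i
    have hxi : |x i| ≤ 4⁻¹ := by
      calc |x i| = ‖x i‖ := rfl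
        _ ≤ ‖x‖ := norm_le_pi_norm x i
        _ ≤ 4⁻¹ := hBnorm x hx
    rw [abs_le] at hxi
    show ⌊x i + 2⁻¹⌋ = 0
    rw [Int.floor_eq_iff]
    constructor
    · push_cast; linarith [hxi.1]
    · push_cast; linarith [hxi.2]
  have hBbdd : IsBounded B :=
    isBounded_iff_forall_norm_le.2 ⟨4⁻¹, hBnorm⟩
  have hBNF : NF B := hBconv.addHaar_frontier volume
  have hB0 : B ⊆ cell 0 := fun x hx => hBcell x hx
  -- iterated contraction
  have hνiter : ∀ (M : ℕ) (x : Fin n → ℝ), ν ((Br ^ M) *ᵥ x) ≤ θ ^ M * ν x := by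
    intro M
    induction M with
    | zero => intro x; simp [Matrix.one_mulVec]
    | succ M ih =>
      intro x
      have h1 : (Br ^ (M + 1)) *ᵥ x = Br *ᵥ ((Br ^ M) *ᵥ x) := by
        rw [Matrix.mulVec_mulVec, ← pow_succ']
      rw [h1]
      calc ν (Br *ᵥ ((Br ^ M) *ᵥ x)) ≤ θ * ν ((Br ^ M) *ᵥ x) := hν3 _
        _ ≤ θ * (θ ^ M * ν x) := mul_le_mul_of_nonneg_left (ih x) (le_of_lt hθ0)
        _ = θ ^ (M + 1) * ν x := by ring
  -- choose the level M
  obtain ⟨M, hM⟩ : ∃ M : ℕ, θ ^ M * (Λ + 1) ≤ 4⁻¹ := by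
    obtain ⟨M, hM⟩ := exists_pow_lt_of_lt_one
      (show (0:ℝ) < 4⁻¹ / (Λ + 1) by positivity) hθ1
    refine ⟨M, ?_⟩
    have hΛ1 : 0 < Λ + 1 := by linarith
    rw [lt_div_iff₀ hΛ1] at hM
    linarith
  -- inverse powers identity
  have hpowinv : ∀ j : ℕ, Ar ^ j * Br ^ j = 1 := by
    intro j
    induction j with
    | zero => simp
    | succ j ih =>
      rw [pow_succ, pow_succ', mul_assoc (Ar ^ j) Ar (Br * Br ^ j),
        ← mul_assoc Ar Br (Br ^ j), hAB, one_mul, ih]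
  -- points in the unit cell come from B after M steps
  have hcell0 : ∀ x : Fin n → ℝ, flr x = 0 →
      (Br ^ M) *ᵥ x ∈ B ∧ x = (Ar ^ M) *ᵥ ((Br ^ M) *ᵥ x) := by
    intro x hx
    have hxB : ‖x‖ ≤ 1 := by
      have : ∀ i, ‖x i‖ ≤ 1 := by
        intro i
        have h := congrFun hx i
        have h' : ⌊x i + 2⁻¹⌋ = 0 := h
        have := Int.floor_eq_iff.1 h'
        simp only [Int.cast_zero, zero_add] at this
        rw [Real.norm_eq_abs, abs_le]
        constructor <;> linarith [this.1, this.2]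
      exact pi_norm_le_iff_of_nonneg zero_le_one |>.2 this
    constructor
    · show ν ((Br ^ M) *ᵥ x) ≤ 4⁻¹
      calc ν ((Br ^ M) *ᵥ x) ≤ θ ^ M * ν x := hνiter M x
        _ ≤ θ ^ M * (Λ + 1) := by
            have hν' : ν x ≤ Λ + 1 := by
              calc ν x ≤ Λ * ‖x‖ := hν2 x
                _ ≤ Λ * 1 := mul_le_mul_of_nonneg_left hxB hΛ0
                _ ≤ Λ + 1 := by linarith
            exact mul_le_mul_of_nonneg_left hν' (by positivity)
        _ ≤ 4⁻¹ := hM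
    · rw [Matrix.mulVec_mulVec, hpowinv, Matrix.one_mulVec]
  -- radius and cell list
  set R : ℝ := ‖Ar ^ M‖ * 4⁻¹ + 1 with hRdef
  set L : ℤ := ⌈R⌉ + 1 with hLdef
  set F : Finset (Fin n → ℤ) := Fintype.piFinset fun _ => Finset.Icc (-L) L with hFdef
  set l : List (Fin n → ℤ) := F.toList with hldef
  have hRnonneg : (0:ℝ) ≤ R := by positivity
  have hmemF : ∀ y : Fin n → ℝ, ‖y‖ ≤ R → flr y ∈ l := by
    intro y hy
    rw [hldef, Finset.mem_toList, hFdef, Fintype.mem_piFinset]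
    intro i
    have hyi : |y i| ≤ R := by
      calc |y i| = ‖y i‖ := rfl
        _ ≤ ‖y‖ := norm_le_pi_norm y i
        _ ≤ R := hy
    rw [abs_le] at hyi
    have hceil := Int.le_ceil R
    rw [Finset.mem_Icc]
    have hfl1 : (flr y i : ℝ) > y i + 2⁻¹ - 1 := Int.sub_one_lt_floor _
    have hfl2 : (flr y i : ℝ) ≤ y i + 2⁻¹ := Int.floor_le _
    have hLR : (L : ℝ) = (⌈R⌉ : ℝ) + 1 := by rw [hLdef]; push_cast; ring
    constructor
    · have h1 : ((-L : ℤ) : ℝ) ≤ (flr y i : ℝ) := by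
        have : ((-L : ℤ) : ℝ) = -((⌈R⌉:ℝ) + 1) := by rw [hLdef]; push_cast; ring
        rw [this]
        linarith [hyi.1, hceil]
      exact_mod_cast h1
    · have h1 : (flr y i : ℝ) ≤ (L : ℝ) := by
        rw [hLR]
        linarith [hyi.2, hceil]
      exact_mod_cast h1
  -- forward images of B
  set Fm : ℕ → Set (Fin n → ℝ) := fun j => (fun x => (Ar ^ j) *ᵥ x) '' B with hFmdef
  have hBsubfB : ∀ (S : Set (Fin n → ℝ)), (∀ x ∈ S, Br *ᵥ x ∈ S) →
      S ⊆ (fun x => Ar *ᵥ x) '' S := by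
    intro S hS x hx
    exact ⟨Br *ᵥ x, hS x hx, hfg x⟩
  have hFmsucc : ∀ j, Fm j ⊆ Fm (j + 1) := by
    rintro j y ⟨x, hx, rfl⟩
    refine ⟨Br *ᵥ x, hBg x hx, ?_⟩
    show Ar ^ (j + 1) *ᵥ (Br *ᵥ x) = Ar ^ j *ᵥ x
    rw [Matrix.mulVec_mulVec, pow_succ, Matrix.mul_assoc, hAB, Matrix.mul_one]
  have hFmmono : ∀ j k, j ≤ k → Fm j ⊆ Fm k := by
    intro j k hjk
    induction k with
    | zero => rw [Nat.le_zero.1 hjk]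
    | succ k ih =>
      rcases Nat.lt_or_ge j (k+1) with h | h
      · exact (ih (by omega)).trans (hFmsucc k)
      · have : j = k + 1 := by omega
        rw [this]
  have hFmR : ∀ y ∈ Fm M, ‖y‖ ≤ R := by
    rintro y ⟨x, hx, rfl⟩
    calc ‖(Ar ^ M) *ᵥ x‖ ≤ ‖Ar ^ M‖ * ‖x‖ := Matrix.linfty_opNorm_mulVec _ _
      _ ≤ ‖Ar ^ M‖ * 4⁻¹ := mul_le_mul_of_nonneg_left (hBnorm x hx) (norm_nonneg _)
      _ ≤ R := by rw [hRdef]; linarith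
  -- the recursive construction
  set K : ℕ → Set (Fin n → ℝ) := fun j =>
    Nat.rec B (fun _ K' => greedy ((fun x => Ar *ᵥ x) '' K') K' l) j with hKdef
  have hK0 : K 0 = B := rfl
  have hKsucc : ∀ j, K (j + 1) = greedy ((fun x => Ar *ᵥ x) '' K j) (K j) l := fun j => rfl
  have hKmono : ∀ j, K j ⊆ K (j + 1) := by
    intro j
    rw [hKsucc j]
    exact subset_greedy l (K j)
  have hKg : ∀ j, ∀ x ∈ K j, Br *ᵥ x ∈ K j := by
    intro j
    induction j with
    | zero => exact hBg
    | succ j ih =>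
      intro x hx
      rcases greedy_subset l (K j) (hKsucc j ▸ hx) with h | h
      · exact hKmono j (ih x h)
      · obtain ⟨w, hw, rfl⟩ := h
        have : Br *ᵥ ((fun x => Ar *ᵥ x) w) = w := hgf w
        rw [this]
        exact hKmono j hw
  have hKsubf : ∀ j, K j ⊆ (fun x => Ar *ᵥ x) '' K j := fun j => hBsubfB (K j) (hKg j)
  have hKFm : ∀ j, K j ⊆ Fm j := by
    intro j
    induction j with
    | zero =>
      intro x hx
      exact ⟨x, hx, by show Ar ^ 0 *ᵥ x = x; rw [pow_zero, Matrix.one_mulVec]⟩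
    | succ j ih =>
      intro x hx
      rcases greedy_subset l (K j) (hKsucc j ▸ hx) with h | h
      · -- x ∈ K j ⊆ f '' K j ⊆ f '' Fm j = Fm (j+1)
        obtain ⟨w, hw, rfl⟩ := hKsubf j h
        obtain ⟨v, hv, rfl⟩ := ih hw
        refine ⟨v, hv, ?_⟩
        show Ar ^ (j+1) *ᵥ v = Ar *ᵥ (Ar ^ j *ᵥ v)
        rw [Matrix.mulVec_mulVec, ← pow_succ']
      · obtain ⟨w, hw, rfl⟩ := h
        obtain ⟨v, hv, rfl⟩ := ih hw
        refine ⟨v, hv, ?_⟩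
        show Ar ^ (j+1) *ᵥ v = Ar *ᵥ (Ar ^ j *ᵥ v)
        rw [Matrix.mulVec_mulVec, ← pow_succ']
  have hSelK : ∀ j, Sel (K j) := by
    intro j
    induction j with
    | zero =>
      intro p hp z hpz
      exact cell_unique (hB0 hp) (hB0 hpz)
    | succ j ih =>
      rw [hKsucc j]
      exact sel_greedy l (K j) ih
  have hNFK : ∀ j, NF (K j) ∧ IsBounded (K j) := by
    intro j
    induction j with
    | zero => exact ⟨hBNF, hBbdd⟩
    | succ j ih =>
      rw [hKsucc j]
      exact NF_greedy l (K j) (NF_image hBA hAB ih.1) (bounded_image Ar ih.2) ih.1 ih.2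
  -- integer translation commutes with Ar
  have hzvecAr : ∀ z : Fin n → ℤ, Ar *ᵥ zvec z = zvec (A *ᵥ z) := by
    intro z
    funext i
    show (Ar *ᵥ zvec z) i = ((A *ᵥ z) i : ℝ)
    simp only [Matrix.mulVec, dotProduct, hArdef, Matrix.map_apply, zvec]
    push_cast
    rfl
  -- coverage of residues
  have hcov : ∀ j, j ≤ M → ∀ y ∈ Fm j, y ∈ tr (K j) := by
    intro j
    induction j with
    | zero =>
      rintro _ y ⟨x, hx, rfl⟩
      have hx0 : (fun w => (Ar ^ 0) *ᵥ w) x = x := by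
        show Ar ^ 0 *ᵥ x = x
        rw [pow_zero, Matrix.one_mulVec]
      rw [hx0]
      exact subset_tr hx
    | succ j ih =>
      rintro hj y ⟨x, hx, rfl⟩
      have hy' : (Ar ^ j) *ᵥ x ∈ Fm j := ⟨x, hx, rfl⟩
      obtain ⟨z, hz⟩ := mem_tr.1 (ih (by omega) _ hy')
      set w := Ar *ᵥ ((Ar ^ j) *ᵥ x + zvec z) with hwdef
      have hwX : w ∈ (fun x => Ar *ᵥ x) '' K j := ⟨_, hz, rfl⟩
      have hwFm : w ∈ Fm (j + 1) := by
        obtain ⟨v, hv, hveq⟩ := hKFm j hz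
        refine ⟨v, hv, ?_⟩
        show Ar ^ (j+1) *ᵥ v = w
        rw [hwdef, ← hveq, Matrix.mulVec_mulVec, ← pow_succ']
      have hwR : ‖w‖ ≤ R := hFmR w (hFmmono _ _ hj hwFm)
      have hwtr : w ∈ tr (K (j + 1)) := by
        rw [hKsucc j]
        exact mem_tr_greedy l (K j) hwX (hmemF w hwR)
      have hweq : w = (Ar ^ (j+1)) *ᵥ x + zvec (A *ᵥ z) := by
        rw [hwdef, Matrix.mulVec_add, hzvecAr, Matrix.mulVec_mulVec, ← pow_succ']
      have := tr_shift (-(A *ᵥ z)) hwtr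
      have heq2 : w + zvec (-(A *ᵥ z)) = (Ar ^ (j+1)) *ᵥ x := by
        rw [hweq]
        have : zvec (-(A *ᵥ z)) = -zvec (A *ᵥ z) := by
          rw [show -(A *ᵥ z) = 0 - A *ᵥ z by ring, zvec_sub, zvec_zero]; ring
        rw [this]; abel
      rwa [heq2] at this
  have hcovAll : ∀ x : Fin n → ℝ, x ∈ tr (K M) := by
    intro x
    set r : Fin n → ℝ := x - zvec (flr x) with hrdef
    have hrcell : flr r = 0 := by
      funext i
      show ⌊r i + 2⁻¹⌋ = 0
      have : r i + 2⁻¹ = (x i + 2⁻¹) - (flr x i : ℝ) := by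
        rw [hrdef]; show x i - (flr x i : ℝ) + 2⁻¹ = _; ring
      rw [this, Int.floor_sub_intCast]
      show ⌊x i + 2⁻¹⌋ - flr x i = 0
      simp [flr]
    obtain ⟨hrB, hreq⟩ := hcell0 r hrcell
    have hrFm : r ∈ Fm M := ⟨(Br ^ M) *ᵥ r, hrB, hreq.symm⟩
    have hrtr : r ∈ tr (K M) := hcov M le_rfl r hrFm
    have := tr_shift (flr x) hrtr
    have heq : r + zvec (flr x) = x := by rw [hrdef]; abel
    rwa [heq] at this
  -- the final set
  have hBK : ∀ j, B ⊆ K j := by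
    intro j
    induction j with
    | zero => exact subset_rfl
    | succ j ih => exact ih.trans (hKmono j)
  refine ⟨closure (K M), ?_, ?_, ?_, ?_⟩
  · exact Metric.isCompact_of_isClosed_isBounded isClosed_closure (hNFK M).2.closure
  · -- 0 in the interior
    set δ : ℝ := 4⁻¹ / (Λ + 1) with hδdef
    have hδpos : 0 < δ := by positivity
    have hball : Metric.ball 0 δ ⊆ B := by
      intro x hx
      have hxn : ‖x‖ < δ := by simpa using mem_ball_iff_norm.1 hx
      show ν x ≤ 4⁻¹
      have h1 : ν x ≤ Λ * ‖x‖ := hν2 x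
      have h2 : Λ * ‖x‖ ≤ (Λ + 1) * ‖x‖ := by nlinarith [norm_nonneg x]
      have h3 : (Λ + 1) * ‖x‖ ≤ (Λ + 1) * δ :=
        mul_le_mul_of_nonneg_left (le_of_lt hxn) (by linarith)
      have h4 : (Λ + 1) * δ = 4⁻¹ := by
        rw [hδdef]; field_simp
      linarith
    exact mem_interior.2 ⟨Metric.ball 0 δ, hball.trans ((hBK M).trans subset_closure),
      Metric.isOpen_ball, Metric.mem_ball_self hδpos⟩
  · -- tiling
    have hNnull : volume (⋃ z : Fin n → ℤ, (fun x => x + zvec z) ⁻¹' frontier (K M)) = 0 :=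
      measure_iUnion_null fun z => by
        rw [measure_preimage_add_right]; exact (hNFK M).1
    rw [TilesAE, ae_iff]
    refine measure_mono_null ?_ hNnull
    intro x hx
    simp only [Set.mem_setOf_eq] at hx
    by_contra hxN
    apply hx
    have hfz : ∀ w : Fin n → ℤ, x + zvec w ∉ frontier (K M) := by
      intro w hw
      exact hxN (Set.mem_iUnion.2 ⟨w, hw⟩)
    obtain ⟨z, hz⟩ := mem_tr.1 (hcovAll x)
    refine ⟨z, subset_closure hz, ?_⟩
    intro k hk
    have hkK : x + zvec k ∈ K M := by
      by_cases hint : x + zvec k ∈ interior (K M)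
      · exact interior_subset hint
      · exact absurd ⟨hk, hint⟩ (hfz k)
    have := hSelK M _ hz (k - z) (by rw [zvec_sub]; convert hkK using 1; abel)
    have hkz : k - z = 0 := this
    funext i
    have := congrFun hkz i
    simp only [Pi.sub_apply, Pi.zero_apply, sub_eq_zero] at this
    exact this
  · -- K ⊆ A K
    intro x hx
    have hg : Continuous (fun y => Br *ᵥ y) :=
      Continuous.matrix_mulVec continuous_const continuous_id
    have h1 : Br *ᵥ x ∈ closure ((fun y => Br *ᵥ y) '' K M) := by
      have : (fun y => Br *ᵥ y) '' closure (K M) ⊆ closure ((fun y => Br *ᵥ y) '' K M) :=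
        image_closure_subset_closure_image hg
      exact this ⟨x, hx, rfl⟩
    have h2 : (fun y => Br *ᵥ y) '' K M ⊆ K M := by
      rintro _ ⟨w, hw, rfl⟩
      exact hKg M w hw
    have h3 : Br *ᵥ x ∈ closure (K M) := closure_mono h2 h1
    exact ⟨Br *ᵥ x, h3, hfg x⟩

end Main
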